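/- Fix z ∈ ℂ with Im z > 0 and real x, t. For every μ > 2, the function μ ↦ f(z,μ,x,t) is differentiable at μ, and its derivative equals πi/4 + (1/2)·log(μ/2 − z) + (1/2)·log 2 + (μ/(8T))·[ log(z+T) − log(z−T) − 2·artanh(2T/μ) ], where T = T(μ) = √(μ²/4 − 1) > 0. -/

import Mathlib

/-!
Differentiate term by term. Since `T² = μ²/4 − 1`, `T' = μ/(4T)`. Each of the three terms is
of the form `u log u` with `u` in the upper or lower half plane, contributing `(log u + 1)·u'`;
the three `+1`'s contribute `1/2 + T'/2 − T'/2 = 1/2`. In `T·artanh(w)` with `w = 2T/μ ∈ (0, 1)`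
one has `1 − w² = 4/μ²`, which makes the chain-rule part `T·artanh'(w)·w'` equal to `1/2`,
cancelling the `1/2` above.
-/

open Complex

/-- The principal square root `T(μ) = √(μ²/4 − 1)` (as a complex number). -/
noncomputable def T (μ : ℝ) : ℂ := ((μ : ℂ)^2/4 - 1) ^ ((1 : ℂ)/2)

/-- `artanh(w) = (1/2)·log((1+w)/(1−w))` with the principal logarithm. -/
noncomputable def artanh (w : ℂ) : ℂ := (1/2) * Complex.log ((1 + w)/(1 - w))

/-- The semiclassical NLS phase function `f(z,μ,x,t)`. -/
noncomputable def f (z : ℂ) (μ x t : ℝ) : ℂ :=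
  ((μ : ℂ)/2 - z) * (Real.pi * Complex.I / 2 + Complex.log ((μ : ℂ)/2 - z))
    + ((z + T μ)/2) * Complex.log (z + T μ)
    + ((z - T μ)/2) * Complex.log (z - T μ)
    - T μ * artanh (2 * T μ / (μ : ℂ))
    - (x : ℂ) * z - 2 * (t : ℂ) * z^2
    + ((μ : ℂ)/2) * Complex.log 2

lemma T_sq (μ : ℝ) : T μ ^ 2 = (μ : ℂ) ^ 2 / 4 - 1 := by
  rw [T, one_div]
  exact_mod_cast cpow_nat_inv_pow _ two_ne_zero

lemma T_eq_ofReal_sqrt {μ : ℝ} (h : 4 ≤ μ ^ 2) : T μ = (√(μ ^ 2 / 4 - 1) : ℝ) := by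
  rw [T, Real.sqrt_eq_rpow, ofReal_cpow (by linarith)]
  push_cast
  ring_nf

lemma hasDerivAt_T {μ : ℝ} (h : 4 < μ ^ 2) :
    HasDerivAt (fun m : ℝ => T m) (μ / (4 * T μ)) μ := by
  have hmem : (μ : ℂ) ^ 2 / 4 - 1 ∈ slitPlane := by
    have : (μ : ℂ) ^ 2 / 4 - 1 = ((μ ^ 2 / 4 - 1 : ℝ) : ℂ) := by push_cast; ring
    rw [this, ofReal_mem_slitPlane]
    linarith
  have hT : T μ ≠ 0 := fun h0 => slitPlane_ne_zero hmem (by rw [← T_sq, h0]; ring)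
  refine ((((hasDerivAt_pow 2 (μ : ℂ)).div_const 4).sub_const 1).cpow_const
    (c := 1 / 2) hmem).comp_ofReal.congr_deriv ?_
  rw [cpow_sub _ _ (slitPlane_ne_zero hmem), cpow_one, ← T, ← T_sq]
  field_simp
  ring

lemma hasDerivAt_mul_log {u : ℂ} (hu : u ∈ slitPlane) :
    HasDerivAt (fun v => v * log v) (log u + 1) u :=
  ((hasDerivAt_id' u).mul (hasDerivAt_log hu)).congr_deriv <| by
    rw [mul_inv_cancel₀ (slitPlane_ne_zero hu), one_mul, add_comm]

lemma hasDerivAt_artanh {w : ℂ} (hw : (1 + w) / (1 - w) ∈ slitPlane) :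
    HasDerivAt artanh (1 - w ^ 2)⁻¹ w := by
  have h1 : 1 - w ≠ 0 := fun h => slitPlane_ne_zero hw (by rw [h, div_zero])
  have h2 : 1 + w ≠ 0 := fun h => slitPlane_ne_zero hw (by rw [h, zero_div])
  have h3 : 1 - w ^ 2 ≠ 0 := by
    rw [show 1 - w ^ 2 = (1 + w) * (1 - w) by ring]
    exact mul_ne_zero h2 h1
  have hq := ((hasDerivAt_id' w).const_add 1).div ((hasDerivAt_id' w).const_sub 1) h1
  refine ((hq.clog hw).const_mul (1 / 2)).congr_deriv ?_
  rw [Pi.div_apply]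
  field_simp
  ring

lemma hasDerivAt_T_mul_artanh {μ : ℝ} (hμ : 2 < μ) :
    HasDerivAt (fun m : ℝ => T m * artanh (2 * T m / m))
      (μ / (4 * T μ) * artanh (2 * T μ / μ) + 1 / 2) μ := by
  have hμ0 : (μ : ℂ) ≠ 0 := ofReal_ne_zero.2 (by linarith)
  set s := √(μ ^ 2 / 4 - 1) with hs
  have hTs : T μ = s := T_eq_ofReal_sqrt (by nlinarith)
  have hs0 : 0 < s := Real.sqrt_pos.2 (by nlinarith)
  have hsμ : 2 * s / μ < 1 := by
    rw [div_lt_one (by linarith), ← lt_div_iff₀' two_pos, hs, Real.sqrt_lt' (by linarith)]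
    linarith
  have hmem : (1 + 2 * T μ / μ) / (1 - 2 * T μ / μ) ∈ slitPlane := by
    have : (1 + 2 * T μ / μ) / (1 - 2 * T μ / μ)
        = (((1 + 2 * s / μ) / (1 - 2 * s / μ) : ℝ) : ℂ) := by
      rw [hTs]; push_cast; rfl
    rw [this, ofReal_mem_slitPlane]
    have : 0 < 2 * s / μ := by positivity
    exact div_pos (by linarith) (by linarith)
  have hT := hasDerivAt_T (μ := μ) (by nlinarith)
  have hw := (hT.const_mul 2).div ((hasDerivAt_id μ).ofReal_comp) hμ0
  refine (hT.mul ((hasDerivAt_artanh hmem).comp μ hw)).congr_deriv ?_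
  have hT0 : T μ ≠ 0 := by rw [hTs]; exact_mod_cast hs0.ne'
  have h1w : 1 - (2 * T μ / μ) ^ 2 = 4 / μ ^ 2 := by
    field_simp
    linear_combination (-4) * T_sq μ
  simp only [Function.comp_apply, Pi.div_apply, id, ofReal_one, h1w]
  field_simp
  linear_combination (-16 * T μ) * T_sq μ

lemma f_eq_mul_log (z : ℂ) (μ x t : ℝ) :
    f z μ x t = ((μ : ℂ) / 2 - z) * (Real.pi * I / 2) + ((μ : ℂ) / 2 - z) * log ((μ : ℂ) / 2 - z)
      + ((z + T μ) * log (z + T μ) + (z - T μ) * log (z - T μ)) / 2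
      - T μ * artanh (2 * T μ / μ) - x * z - 2 * t * z ^ 2 + (μ : ℂ) / 2 * log 2 := by
  rw [f]
  ring

/-- For `Im z > 0` and `μ > 2`, the map `μ ↦ f(z,μ,x,t)` is differentiable at `μ`, with
derivative
`πi/4 + (1/2)·log(μ/2 − z) + (1/2)·log 2 + (μ/(8T))[log(z+T) − log(z−T) − 2 artanh(2T/μ)]`,
where `T = T(μ)`. -/
theorem f_hasDerivAt_mu (z : ℂ) (hz : 0 < z.im) (x t : ℝ) (μ : ℝ) (hμ : 2 < μ) :
    HasDerivAt (fun m : ℝ => f z m x t)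
      (Real.pi * Complex.I / 4 + (1/2) * Complex.log ((μ : ℂ)/2 - z)
        + (1/2) * Complex.log 2
        + ((μ : ℂ) / (8 * T μ)) *
            (Complex.log (z + T μ) - Complex.log (z - T μ)
              - 2 * artanh (2 * T μ / (μ : ℂ)))) μ := by
  have hTim : (T μ).im = 0 := by rw [T_eq_ofReal_sqrt (by nlinarith), ofReal_im]
  have mem_of_im (u : ℂ) (hu : u.im ≠ 0) : u ∈ slitPlane := mem_slitPlane_iff.2 (.inr hu)
  have hT := hasDerivAt_T (μ := μ) (by nlinarith)
  have hhalf : HasDerivAt (fun m : ℝ => (m : ℂ) / 2) (1 / 2) μ := by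
    simpa using ((hasDerivAt_id μ).ofReal_comp).div_const 2
  have hlin := hhalf.sub_const z
  have hmid := (hasDerivAt_mul_log (mem_of_im _ (by simp [hz.ne']))).comp μ hlin
  have hplus := (hasDerivAt_mul_log (mem_of_im (z + T μ) (by simp [hTim, hz.ne']))).comp μ
    (hT.const_add z)
  have hminus := (hasDerivAt_mul_log (mem_of_im (z - T μ) (by simp [hTim, hz.ne']))).comp μ
    (hT.const_sub z)
  have hsum := (((((hlin.mul_const (Real.pi * I / 2)).add hmid).add
    ((hplus.add hminus).div_const 2)).sub (hasDerivAt_T_mul_artanh hμ)).sub_const (x * z)).sub_const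
    (2 * t * z ^ 2) |>.add (hhalf.mul_const (log 2))
  refine (hsum.congr_of_eventuallyEq (.of_forall fun m => f_eq_mul_log z m x t)).congr_deriv ?_
  ring
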